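/- arXiv:1608.02805 — 3 statements merged into one kernel-verified Lean document; each statement's English description precedes it below -/
import Mathlib

section
/- Suppose φ_{n+1} is a polynomial with real coefficients, φ*_{n+1}(z) = z^{n+1} φ_{n+1}(1/z) for z ≠ 0, and set K_n(z,z) = (|φ*_{n+1}(z)|² − |φ_{n+1}(z)|²)/(1 − |z|²), K_n^{(0,1)}(z,z) = (conj(φ*'_{n+1}(z))φ*_{n+1}(z) − conj(φ'_{n+1}(z))φ_{n+1}(z))/(1−|z|²) + z·K_n(z,z)/(1−|z|²), and K_n^{(1,1)}(z,z) = (|φ*'_{n+1}(z)|² − |φ'_{n+1}(z)|²)/(1−|z|²) + (conj(z)·K_n^{(0,1)}(z,z) + z·conj(K_n^{(0,1)}(z,z)) + K_n(z,z))/(1−|z|²). Then for |z| ≠ 1, K_n^{(1,1)}(z,z)·K_n(z,z) − |K_n^{(0,1)}(z,z)|² = (K_n(z,z))²/(1−|z|²)² − |φ*_{n+1}(z)·φ'_{n+1}(z) − φ*'_{n+1}(z)·φ_{n+1}(z)|²/(1−|z|²)². -/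
/-!
Write `u = (φ*, φ)` and `v = (φ*', φ')` and pair them with the indefinite Hermitian form
`⟨x, y⟩ = x₁ ȳ₁ - x₂ ȳ₂`. Each kernel is `1 / (1 - |z|²)` times one of the pairings
`⟨u, u⟩, ⟨u, v⟩, ⟨v, v⟩` plus lower-order kernels, and clearing the denominators collapses the
left-hand side to `(K² + ⟨u, u⟩⟨v, v⟩ - |⟨u, v⟩|²) / (1 - |z|²)²`. For a form of signature `(1, 1)`
the Gram determinant `⟨u, u⟩⟨v, v⟩ - |⟨u, v⟩|²` is `-|det(u, v)|²`.
-/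

open Complex ComplexConjugate

theorem indefinite_lagrange_identity {α : Type*} [CommRing α] [StarRing α] (a b c d : α) :
    (b * conj b - a * conj a) * (d * conj d - c * conj c)
      - (conj d * b - conj c * a) * (d * conj b - c * conj a)
      = -((b * c - d * a) * conj (b * c - d * a)) := by
  simp only [map_sub, map_mul]
  ring

/-- `K10` plays the role of `conj K01`, and `s` of `1 - |z|²`, with `w = conj z`. -/
theorem sq_mul_kernel_det {α : Type*} [CommRing α] (z w s P Q Q' R K K01 K10 K11 : α)
    (hs : s = 1 - z * w) (hK : s * K = P) (hK01 : s * K01 = Q + z * K)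
    (hK10 : s * K10 = Q' + w * K) (hK11 : s * K11 = R + w * K01 + z * K10 + K) :
    s ^ 2 * (K11 * K - K01 * K10) = K ^ 2 + (P * R - Q * Q') := by
  linear_combination (s * K) * hK11 + R * hK + (w * K - s * K10) * hK01
    - Q * hK10 + K ^ 2 * hs

/-- the key algebraic identity simplifying the numerator of the intensity
function, where `phi, phis, dphi, dphis` stand for `φ_{n+1}(z), φ*_{n+1}(z)` and their
derivatives at `z`, and the kernels are given by the Christoffel–Darboux expressions. -/
theorem stmt3 (z phi phis dphi dphis : ℂ) (hz : ‖z‖ ≠ 1) :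
    let s : ℂ := 1 - ((‖z‖ : ℝ) : ℂ) ^ 2
    let K : ℂ := ((((‖phis‖) ^ 2 - (‖phi‖) ^ 2 : ℝ)) : ℂ) / s
    let K01 : ℂ := ((starRingEnd ℂ) dphis * phis - (starRingEnd ℂ) dphi * phi) / s
        + z * K / s
    let K11 : ℂ := ((((‖dphis‖) ^ 2 - (‖dphi‖) ^ 2 : ℝ)) : ℂ) / s
        + ((starRingEnd ℂ) z * K01 + z * (starRingEnd ℂ) K01 + K) / s
    K11 * K - (((‖K01‖) ^ 2 : ℝ) : ℂ) =
      K ^ 2 / s ^ 2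
        - (((‖phis * dphi - dphis * phi‖) ^ 2 : ℝ) : ℂ) / s ^ 2 := by
  intro s K K01 K11
  have hsz : s = 1 - z * conj z := by rw [mul_conj']
  have hs : s ≠ 0 := by
    rw [hsz, mul_conj', sub_ne_zero, ← ofReal_one, ← ofReal_pow, ne_eq, ofReal_inj,
      eq_comm, pow_eq_one_iff_of_nonneg (norm_nonneg z) two_ne_zero]
    exact hz
  have hs_conj : conj s = s := by simp [s]
  have hK_conj : conj K = K := by simp [K, hs_conj]
  have hK : s * K = phis * conj phis - phi * conj phi := by
    simp only [K, mul_conj']; push_cast; field_simp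
  have hK01 : s * K01 = (conj dphis * phis - conj dphi * phi) + z * K := by
    simp only [K01]; field_simp
  have hK10 : s * conj K01 = (dphis * conj phis - dphi * conj phi) + conj z * K := by
    rw [← hs_conj, ← map_mul, hK01]
    simp only [map_add, map_sub, map_mul, conj_conj, hK_conj]
  have hK11 : s * K11 = (dphis * conj dphis - dphi * conj dphi)
      + conj z * K01 + z * conj K01 + K := by
    simp only [K11, mul_conj']; push_cast; field_simp; ring
  have hdet := sq_mul_kernel_det _ _ _ _ _ _ _ _ _ _ _ hsz hK hK01 hK10 hK11
  rw [indefinite_lagrange_identity] at hdet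
  simp only [ofReal_pow, ← mul_conj']
  field_simp
  linear_combination hdet
end

section
/- Let K(z,z) = 1/((1−|z|²)|D(z)|²) with D holomorphic and nonvanishing on 𝔻, and define K^{(0,1)}(z,z) and K^{(1,1)}(z,z) as in the Szegő kernel computation. Then the limiting intensity (K^{(1,1)}(z,z)·K(z,z) − |K^{(0,1)}(z,z)|²)/(π·K(z,z)²) equals 1/(π(1−|z|²)²) for every |z| < 1; in particular it is independent of D. -/
open Complex Real Metric

/-!
Writing `L = D'/D` and `u = K⁽⁰¹⁾/K = z/s - conj L` with `s = 1 - |z|²`, the kernel `K` is real, so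
the intensity is `(K⁽¹¹⁾/K - |u|²)/π`, and `K⁽¹¹⁾/K = (1 + conj z u + z conj u)/s + |L|²`. In the
difference every term containing `L` cancels, leaving `1/s + |z|²/s² = 1/s²`.
-/

open ComplexConjugate

lemma ofReal_norm_sq_eq_mul_conj (x : ℂ) : ((‖x‖ ^ 2 : ℝ) : ℂ) = x * conj x := by
  push_cast
  exact (mul_conj' x).symm

lemma one_sub_norm_sq_ne_zero {z : ℂ} (hz : ‖z‖ < 1) : ((1 - ‖z‖ ^ 2 : ℝ) : ℂ) ≠ 0 := by
  have : ‖z‖ ^ 2 < 1 := by nlinarith [norm_nonneg z]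
  exact_mod_cast (sub_pos.2 this).ne'

lemma normalized_intensity_eq_one_div_sq {z zb L Lb s : ℂ} (hs : s = 1 - z * zb) (hs0 : s ≠ 0) :
    (1 + zb * (z / s - Lb) + z * (zb / s - L)) / s + L * Lb - (z / s - Lb) * (zb / s - L)
      = 1 / s ^ 2 := by
  field_simp
  linear_combination hs

theorem szego_intensity_eq {z w d : ℂ} (hz : ‖z‖ < 1) (hw : w ≠ 0) :
    let s : ℂ := ((1 - ‖z‖ ^ 2 : ℝ) : ℂ)
    let K : ℂ := 1 / (s * ((‖w‖ ^ 2 : ℝ) : ℂ))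
    let K01 : ℂ := z * K / s - conj d * K / conj w
    let K11 : ℂ := (K + conj z * K01 + z * conj K01) / s
      + ((‖d‖ ^ 2 : ℝ) : ℂ) / (s * ((‖w‖ ^ 4 : ℝ) : ℂ))
    (K11 * K - ((‖K01‖ ^ 2 : ℝ) : ℂ)) / ((π : ℂ) * K ^ 2) = 1 / ((π : ℂ) * s ^ 2) := by
  intro s K K01 K11
  have hs0 : s ≠ 0 := one_sub_norm_sq_ne_zero hz
  have hs : s = 1 - z * conj z := by
    simp only [s, ofReal_sub, ofReal_one, ofReal_norm_sq_eq_mul_conj]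
  have hsc : conj s = s := conj_ofReal _
  have hK : K = 1 / (s * (w * conj w)) := by simp only [K, ofReal_norm_sq_eq_mul_conj]
  have hwc : conj w ≠ 0 := (map_ne_zero _).2 hw
  have hK0 : K ≠ 0 := by simp [hK, hs0, hw]
  have hKc : conj K = K := by simp only [hK, map_div₀, map_one, map_mul, hsc, conj_conj, mul_comm]
  set L := d / w
  set u := z / s - conj L
  have hu : conj u = conj z / s - L := by simp only [u, map_sub, map_div₀, hsc, conj_conj]
  have hK01 : K01 = K * u := by simp only [K01, u, L, map_div₀]; field_simp
  have hK11 : K11 = K * ((1 + conj z * u + z * conj u) / s + L * conj L) := by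
    have hnorm4 : ((‖w‖ ^ 4 : ℝ) : ℂ) = (w * conj w) ^ 2 := by
      rw [← ofReal_norm_sq_eq_mul_conj]; push_cast; ring
    simp only [K11, hK01, map_mul, hKc]
    simp only [ofReal_norm_sq_eq_mul_conj, hnorm4, L, map_div₀, hK]
    field_simp
  rw [ofReal_norm_sq_eq_mul_conj, hK11, hK01, map_mul, hKc, hu]
  calc _ = ((1 + conj z * u + z * (conj z / s - L)) / s + L * conj L
          - u * (conj z / s - L)) / π := by field_simp
    _ = 1 / (π * s ^ 2) := by
      rw [normalized_intensity_eq_one_div_sq hs hs0]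
      field_simp

theorem stmt6_general (D : ℂ → ℂ)
    (hD0 : ∀ z ∈ Metric.ball (0 : ℂ) 1, D z ≠ 0) :
    ∀ z : ℂ, ‖z‖ < 1 →
      let s : ℂ := ((1 - (‖z‖) ^ 2 : ℝ) : ℂ)
      let K : ℂ := 1 / (s * (((‖D z‖) ^ 2 : ℝ) : ℂ))
      let K01 : ℂ := z * K / s - (starRingEnd ℂ) (deriv D z) * K / (starRingEnd ℂ) (D z)
      let K11 : ℂ := (K + (starRingEnd ℂ) z * K01 + z * (starRingEnd ℂ) K01) / s
        + (((‖deriv D z‖) ^ 2 : ℝ) : ℂ)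
          / (s * (((‖D z‖) ^ 4 : ℝ) : ℂ))
      (K11 * K - (((‖K01‖) ^ 2 : ℝ) : ℂ)) / ((π : ℂ) * K ^ 2)
        = 1 / ((π : ℂ) * s ^ 2) :=
  fun z hz => szego_intensity_eq hz (hD0 z (mem_ball_zero_iff.2 hz))

/-- the limiting intensity computed from the Szegő kernel quantities equals
`1/(π(1−|z|²)²)` for `|z| < 1`, independently of `D`. -/
theorem stmt6 (D : ℂ → ℂ)
    (hD : DifferentiableOn ℂ D (Metric.ball (0 : ℂ) 1))
    (hD0 : ∀ z ∈ Metric.ball (0 : ℂ) 1, D z ≠ 0) :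
    ∀ z : ℂ, ‖z‖ < 1 →
      let s : ℂ := ((1 - (‖z‖) ^ 2 : ℝ) : ℂ)
      let K : ℂ := 1 / (s * (((‖D z‖) ^ 2 : ℝ) : ℂ))
      let K01 : ℂ := z * K / s - (starRingEnd ℂ) (deriv D z) * K / (starRingEnd ℂ) (D z)
      let K11 : ℂ := (K + (starRingEnd ℂ) z * K01 + z * (starRingEnd ℂ) K01) / s
        + (((‖deriv D z‖) ^ 2 : ℝ) : ℂ)
          / (s * (((‖D z‖) ^ 4 : ℝ) : ℂ))
      (K11 * K - (((‖K01‖) ^ 2 : ℝ) : ℂ)) / ((π : ℂ) * K ^ 2)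
        = 1 / ((π : ℂ) * s ^ 2) :=
  stmt6_general D hD0
end

section
/- Suppose for each n, φ_{n+1} is a polynomial of degree n+1 with real coefficients such that φ_{n+1}(z^{-1}) → 0 and φ'_{n+1}(z^{-1}) → 0 for each fixed |z| > 1, and z^{-(n+1)}·φ_{n+1}(z)·D(z^{-1}) → 1 with the error and its derivative tending to 0 locally uniformly, where D is holomorphic and nonvanishing on 𝔻. Then with φ*_{n+1}(z) = z^{n+1}φ_{n+1}(1/z), the quotient |φ*_{n+1}(z)φ'_{n+1}(z) − φ*'_{n+1}(z)φ_{n+1}(z)|² / (|φ*_{n+1}(z)|² − |φ_{n+1}(z)|²)² tends to 0 as n → ∞ for each fixed |z| > 1. -/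
open Complex Polynomial Filter Metric

/-- under the Szegő asymptotics for `|z| > 1` (encoded as hypotheses:
`φ_{n+1}(1/z) → 0`, `φ'_{n+1}(1/z) → 0`, and `e_n(w) = w^{-(n+1)}φ_{n+1}(w)D(1/w) − 1 → 0`
together with `e_n' → 0`, locally uniformly on `{|w| > 1}`), the quotient
`|φ*_{n+1}φ'_{n+1} − φ*'_{n+1}φ_{n+1}|²/(|φ*_{n+1}|² − |φ_{n+1}|²)²` tends to `0`. -/
theorem stmt12 (φ : ℕ → Polynomial ℂ) (D : ℂ → ℂ)
    (hdeg : ∀ n, (φ n).degree = (n : ℕ))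
    (hreal : ∀ n k, ((φ n).coeff k).im = 0)
    (hD : DifferentiableOn ℂ D (Metric.ball (0 : ℂ) 1))
    (hD0 : ∀ w ∈ Metric.ball (0 : ℂ) 1, D w ≠ 0)
    (z : ℂ) (hz : 1 < norm z)
    (h1 : Tendsto (fun n : ℕ => (φ (n + 1)).eval z⁻¹) atTop (nhds 0))
    (h2 : Tendsto (fun n : ℕ => (Polynomial.derivative (φ (n + 1))).eval z⁻¹) atTop (nhds 0))
    (he : TendstoLocallyUniformlyOn
      (fun (n : ℕ) (w : ℂ) => (w ^ (n + 1))⁻¹ * (φ (n + 1)).eval w * D w⁻¹ - 1) 0 atTop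
      {w : ℂ | 1 < norm w})
    (he' : TendstoLocallyUniformlyOn
      (fun (n : ℕ) => deriv (fun w : ℂ => (w ^ (n + 1))⁻¹ * (φ (n + 1)).eval w * D w⁻¹ - 1))
      0 atTop {w : ℂ | 1 < norm w}) :
    Tendsto (fun n : ℕ =>
        (norm ((z ^ (n + 1) * (φ (n + 1)).eval z⁻¹)
              * (Polynomial.derivative (φ (n + 1))).eval z
            - deriv (fun w : ℂ => w ^ (n + 1) * (φ (n + 1)).eval w⁻¹) z
              * (φ (n + 1)).eval z)) ^ 2
          / ((norm (z ^ (n + 1) * (φ (n + 1)).eval z⁻¹)) ^ 2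
              - (norm ((φ (n + 1)).eval z)) ^ 2) ^ 2)
      atTop (nhds 0) := by
  have hz0 : z ≠ 0 := by
    intro h; rw [h] at hz; simp at hz; norm_num at hz
  have habsz0 : norm z ≠ 0 := by
    simpa using hz0
  have habsinv : norm z⁻¹ < 1 := by
    rw [norm_inv]; exact inv_lt_one_of_one_lt₀ hz
  have hzinv : z⁻¹ ∈ Metric.ball (0 : ℂ) 1 := by
    simpa [Metric.mem_ball, Complex.dist_eq] using habsinv
  have hd : D z⁻¹ ≠ 0 := hD0 _ hzinv
  have habsd : norm (D z⁻¹) ≠ 0 := by simpa using hd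
  have hDat : DifferentiableAt ℂ D z⁻¹ :=
    hD.differentiableAt (Metric.isOpen_ball.mem_nhds hzinv)
  have hDinv : DifferentiableAt ℂ (fun w : ℂ => D w⁻¹) z :=
    hDat.comp z (differentiableAt_inv hz0)
  have hG : DifferentiableAt ℂ (fun w : ℂ => (D w⁻¹)⁻¹) z := hDinv.inv hd
  have hzmem : z ∈ {w : ℂ | 1 < norm w} := hz
  -- pointwise limits at z
  have hee : Tendsto (fun n : ℕ => (z ^ (n + 1))⁻¹ * (φ (n + 1)).eval z * D z⁻¹ - 1)
      atTop (nhds 0) := by simpa using he.tendsto_at hzmem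
  have hεε : Tendsto
      (fun n : ℕ => deriv (fun w : ℂ => (w ^ (n + 1))⁻¹ * (φ (n + 1)).eval w * D w⁻¹ - 1) z)
      atTop (nhds 0) := by simpa using he'.tendsto_at hzmem
  -- eventual factorization of φ near z
  have hev : ∀ n : ℕ,
      (fun w : ℂ => (φ (n + 1)).eval w) =ᶠ[nhds z]
      (fun w : ℂ => w ^ (n + 1) *
        ((((w ^ (n + 1))⁻¹ * (φ (n + 1)).eval w * D w⁻¹ - 1) + 1) * (D w⁻¹)⁻¹)) := by
    intro n
    have h1' : ∀ᶠ w in nhds z, w ≠ 0 := eventually_ne_nhds hz0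
    have h2' : ∀ᶠ w in nhds z, D w⁻¹ ≠ 0 := hDinv.continuousAt.eventually_ne hd
    filter_upwards [h1', h2'] with w hw0 hwD
    rw [sub_add_cancel, mul_inv_cancel_right₀ hwD, mul_inv_cancel_left₀ (pow_ne_zero _ hw0)]
  -- value of φ at z
  have hφz : ∀ n : ℕ, (φ (n + 1)).eval z
      = z ^ (n + 1) *
        ((((z ^ (n + 1))⁻¹ * (φ (n + 1)).eval z * D z⁻¹ - 1) + 1) * (D z⁻¹)⁻¹) := by
    intro n
    rw [sub_add_cancel, mul_inv_cancel_right₀ hd, mul_inv_cancel_left₀ (pow_ne_zero _ hz0)]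
  -- derivative of φ at z
  have hφ' : ∀ n : ℕ, (Polynomial.derivative (φ (n + 1))).eval z
      = ((n + 1 : ℕ) : ℂ) * z ^ (n + 1 - 1) *
          ((((z ^ (n + 1))⁻¹ * (φ (n + 1)).eval z * D z⁻¹ - 1) + 1) * (D z⁻¹)⁻¹)
        + z ^ (n + 1) *
          (deriv (fun w : ℂ => (w ^ (n + 1))⁻¹ * (φ (n + 1)).eval w * D w⁻¹ - 1) z * (D z⁻¹)⁻¹
           + (((z ^ (n + 1))⁻¹ * (φ (n + 1)).eval z * D z⁻¹ - 1) + 1)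
             * deriv (fun w : ℂ => (D w⁻¹)⁻¹) z) := by
    intro n
    have hEdiff : DifferentiableAt ℂ
        (fun w : ℂ => (w ^ (n + 1))⁻¹ * (φ (n + 1)).eval w * D w⁻¹ - 1) z := by
      apply DifferentiableAt.sub_const
      have hp : DifferentiableAt ℂ (fun w : ℂ => w ^ (n + 1)) z := differentiableAt_pow (n + 1)
      exact ((hp.inv (pow_ne_zero _ hz0)).mul
        ((φ (n + 1)).differentiable.differentiableAt)).mul hDinv
    have hF : HasDerivAt
        (fun w : ℂ => ((w ^ (n + 1))⁻¹ * (φ (n + 1)).eval w * D w⁻¹ - 1) + 1)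
        (deriv (fun w : ℂ => (w ^ (n + 1))⁻¹ * (φ (n + 1)).eval w * D w⁻¹ - 1) z) z :=
      hEdiff.hasDerivAt.add_const 1
    have hGd : HasDerivAt (fun w : ℂ => (D w⁻¹)⁻¹)
        (deriv (fun w : ℂ => (D w⁻¹)⁻¹) z) z := hG.hasDerivAt
    have hprod := (hasDerivAt_pow (n + 1) z).mul (hF.mul hGd)
    have hfinal := hprod.congr_of_eventuallyEq (hev n)
    exact (hfinal.unique ((φ (n + 1)).hasDerivAt z)).symm
  -- derivative of reversed polynomial at z
  have hstar : ∀ n : ℕ, deriv (fun w : ℂ => w ^ (n + 1) * (φ (n + 1)).eval w⁻¹) z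
      = ((n + 1 : ℕ) : ℂ) * z ^ (n + 1 - 1) * (φ (n + 1)).eval z⁻¹
        + z ^ (n + 1) * ((Polynomial.derivative (φ (n + 1))).eval z⁻¹ * (-(z ^ 2)⁻¹)) := by
    intro n
    have hcomp : HasDerivAt (fun w : ℂ => (φ (n + 1)).eval w⁻¹)
        ((Polynomial.derivative (φ (n + 1))).eval z⁻¹ * (-(z ^ 2)⁻¹)) z := by
      have h := HasDerivAt.comp z ((φ (n + 1)).hasDerivAt z⁻¹) (hasDerivAt_inv hz0)
      simpa [Function.comp_def] using h
    exact ((hasDerivAt_pow (n + 1) z).mul hcomp).deriv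
  -- Key numerator identity
  have keyT : ∀ n : ℕ,
      (z ^ (n + 1) * (φ (n + 1)).eval z⁻¹) * (Polynomial.derivative (φ (n + 1))).eval z
        - deriv (fun w : ℂ => w ^ (n + 1) * (φ (n + 1)).eval w⁻¹) z * (φ (n + 1)).eval z
      = (z ^ (n + 1)) ^ 2 *
          ((φ (n + 1)).eval z⁻¹ *
            (deriv (fun w : ℂ => (w ^ (n + 1))⁻¹ * (φ (n + 1)).eval w * D w⁻¹ - 1) z
                * (D z⁻¹)⁻¹
              + (((z ^ (n + 1))⁻¹ * (φ (n + 1)).eval z * D z⁻¹ - 1) + 1)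
                * deriv (fun w : ℂ => (D w⁻¹)⁻¹) z)
           + (z ^ 2)⁻¹ * ((Polynomial.derivative (φ (n + 1))).eval z⁻¹
              * (((z ^ (n + 1))⁻¹ * (φ (n + 1)).eval z * D z⁻¹ - 1) + 1) * (D z⁻¹)⁻¹)) := by
    intro n
    rw [hφ' n, hstar n]
    linear_combination (z ^ (n + 1) * (z ^ 2)⁻¹ * (Polynomial.derivative (φ (n + 1))).eval z⁻¹
      - ((n + 1 : ℕ) : ℂ) * z ^ (n + 1 - 1) * (φ (n + 1)).eval z⁻¹) * hφz n
  -- Key denominator identity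
  have keyQ : ∀ n : ℕ,
      (norm (z ^ (n + 1) * (φ (n + 1)).eval z⁻¹)) ^ 2
        - (norm ((φ (n + 1)).eval z)) ^ 2
      = ((norm z) ^ (n + 1)) ^ 2 *
          ((norm ((φ (n + 1)).eval z⁻¹)) ^ 2
            - (norm ((((z ^ (n + 1))⁻¹ * (φ (n + 1)).eval z * D z⁻¹ - 1) + 1))) ^ 2
              * ((norm (D z⁻¹)) ^ 2)⁻¹) := by
    intro n
    have habseval : norm ((φ (n + 1)).eval z)
        = (norm z) ^ (n + 1) *
          (norm ((((z ^ (n + 1))⁻¹ * (φ (n + 1)).eval z * D z⁻¹ - 1) + 1))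
            * (norm (D z⁻¹))⁻¹) := by
      conv_lhs => rw [hφz n]
      rw [norm_mul, norm_mul, norm_pow, norm_inv]
    rw [habseval, norm_mul, norm_pow]
    ring
  -- limits
  have hf1 : Tendsto
      (fun n : ℕ => (((z ^ (n + 1))⁻¹ * (φ (n + 1)).eval z * D z⁻¹ - 1) + 1))
      atTop (nhds 1) := by
    have := hee.add_const 1
    simpa using this
  have hs : Tendsto (fun n : ℕ =>
      (φ (n + 1)).eval z⁻¹ *
        (deriv (fun w : ℂ => (w ^ (n + 1))⁻¹ * (φ (n + 1)).eval w * D w⁻¹ - 1) z * (D z⁻¹)⁻¹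
          + (((z ^ (n + 1))⁻¹ * (φ (n + 1)).eval z * D z⁻¹ - 1) + 1)
            * deriv (fun w : ℂ => (D w⁻¹)⁻¹) z)
       + (z ^ 2)⁻¹ * ((Polynomial.derivative (φ (n + 1))).eval z⁻¹
          * (((z ^ (n + 1))⁻¹ * (φ (n + 1)).eval z * D z⁻¹ - 1) + 1) * (D z⁻¹)⁻¹))
      atTop (nhds 0) := by
    have t1 := (hεε.mul_const ((D z⁻¹)⁻¹)).add
      (hf1.mul_const (deriv (fun w : ℂ => (D w⁻¹)⁻¹) z))
    have t2 := h1.mul t1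
    have t3 := (h2.mul hf1).mul_const ((D z⁻¹)⁻¹)
    have t4 := t3.const_mul ((z ^ 2)⁻¹)
    simpa using t2.add t4
  have hA2 : Tendsto (fun n : ℕ => (norm ((φ (n + 1)).eval z⁻¹)) ^ 2)
      atTop (nhds 0) := by
    have := (continuous_norm.tendsto 0).comp h1
    simpa using this.pow 2
  have hF2 : Tendsto (fun n : ℕ =>
      (norm ((((z ^ (n + 1))⁻¹ * (φ (n + 1)).eval z * D z⁻¹ - 1) + 1))) ^ 2)
      atTop (nhds 1) := by
    have := (continuous_norm.tendsto 1).comp hf1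
    simpa using this.pow 2
  have hq : Tendsto (fun n : ℕ =>
      (norm ((φ (n + 1)).eval z⁻¹)) ^ 2
        - (norm ((((z ^ (n + 1))⁻¹ * (φ (n + 1)).eval z * D z⁻¹ - 1) + 1))) ^ 2
          * ((norm (D z⁻¹)) ^ 2)⁻¹)
      atTop (nhds (0 - 1 * ((norm (D z⁻¹)) ^ 2)⁻¹)) :=
    hA2.sub (hF2.mul_const _)
  have hL : (0 - 1 * ((norm (D z⁻¹)) ^ 2)⁻¹) ≠ 0 := by
    have : ((norm (D z⁻¹)) ^ 2)⁻¹ ≠ 0 := inv_ne_zero (pow_ne_zero _ habsd)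
    simpa using this
  have hqne := hq.eventually_ne hL
  have hmain : Tendsto (fun n : ℕ =>
      (norm ((φ (n + 1)).eval z⁻¹ *
        (deriv (fun w : ℂ => (w ^ (n + 1))⁻¹ * (φ (n + 1)).eval w * D w⁻¹ - 1) z * (D z⁻¹)⁻¹
          + (((z ^ (n + 1))⁻¹ * (φ (n + 1)).eval z * D z⁻¹ - 1) + 1)
            * deriv (fun w : ℂ => (D w⁻¹)⁻¹) z)
       + (z ^ 2)⁻¹ * ((Polynomial.derivative (φ (n + 1))).eval z⁻¹
          * (((z ^ (n + 1))⁻¹ * (φ (n + 1)).eval z * D z⁻¹ - 1) + 1) * (D z⁻¹)⁻¹))) ^ 2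
      / ((norm ((φ (n + 1)).eval z⁻¹)) ^ 2
        - (norm ((((z ^ (n + 1))⁻¹ * (φ (n + 1)).eval z * D z⁻¹ - 1) + 1))) ^ 2
          * ((norm (D z⁻¹)) ^ 2)⁻¹) ^ 2)
      atTop (nhds 0) := by
    have hnum := ((continuous_norm.tendsto 0).comp hs).pow 2
    have hden := hq.pow 2
    have := hnum.div hden (pow_ne_zero _ hL)
    simpa [Pi.div_def] using this
  refine Tendsto.congr' ?_ hmain
  filter_upwards [hqne] with n hn
  rw [keyT n, keyQ n, norm_mul, norm_pow, norm_pow, mul_pow, mul_pow,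
    mul_div_mul_left _ _ (by positivity : ((((norm z) ^ (n + 1)) ^ 2) ^ 2 : ℝ) ≠ 0)]
end
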